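/- Let W₁ and W₂ be subsets of I, and for m = 1, 2 let B_m be the unital subalgebra of A generated by ι(D) ∪ {x ∈ A : x(i) = 0 for all i ∉ W_m}. Suppose there exist i₀ ∈ W₁ ∩ W₂ and an element a ∈ A_{i₀} with φ_{i₀}(a²) ≠ φ_{i₀}(a)². Then B₁ and B₂ are NOT free over D in (A, E). -/

import Mathlib

/-- The diagonal embedding `ι : (I → ℂ) → Π i, A i`, `ι d = (d i • 1)_{i}`. -/
noncomputable def diag {I : Type*} (A : I → Type*) [∀ i, Ring (A i)]
    [∀ i, Algebra ℂ (A i)] (d : I → ℂ) : ∀ i, A i :=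
  fun i => d i • (1 : A i)

/-- The componentwise conditional expectation `E : Π i, A i → (I → ℂ)`. -/
noncomputable def condExp {I : Type*} {A : I → Type*} [∀ i, Ring (A i)]
    [∀ i, Algebra ℂ (A i)] (φ : ∀ i, A i →ₗ[ℂ] ℂ) (x : ∀ i, A i) : I → ℂ :=
  fun i => φ i (x i)

/-- Two subalgebras `B₁, B₂` of `A = Π i, A i` are free over `D` with respect to
`E = condExp φ`: every alternating product of `E`-centered elements is `E`-centered. -/
def FreeOverD {I : Type*} {A : I → Type*} [∀ i, Ring (A i)] [∀ i, Algebra ℂ (A i)]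
    (φ : ∀ i, A i →ₗ[ℂ] ℂ) (B₁ B₂ : Subalgebra ℂ (∀ i, A i)) : Prop :=
  ∀ (n : ℕ), 1 ≤ n → ∀ (y : Fin n → ∀ i, A i) (c : Fin n → Bool),
    (∀ k, y k ∈ (if c k then B₁ else B₂)) →
    (∀ (k : Fin n) (h : (k : ℕ) + 1 < n), c k ≠ c ⟨(k : ℕ) + 1, h⟩) →
    (∀ k, condExp φ (y k) = 0) →
    condExp φ (List.ofFn y).prod = 0

/-- The unital subalgebra of `A` generated by the diagonal `ι(D)` together with all
tuples supported in `W ⊆ I`. -/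
def supportedAlg {I : Type*} (A : I → Type*) [∀ i, Ring (A i)] [∀ i, Algebra ℂ (A i)]
    (W : Set I) : Subalgebra ℂ (∀ i, A i) :=
  Algebra.adjoin ℂ
    (Set.range (diag A) ∪ {x : ∀ i, A i | ∀ i ∉ W, x i = 0})

/-!
Centre a non-degenerate `a` to `b = a - φ(a)·1` and let `y` be `b` placed at coordinate `i₀`.
Since `i₀ ∈ W₁ ∩ W₂`, `y` lies in both algebras and is `E`-centred, so freeness forces
`E(y · y) = 0`; but `E(y · y)(i₀) = φ(b²) = φ(a²) - φ(a)²`, the variance of `a`, which is nonzero.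
-/

theorem map_sub_smul_one_sq {R B : Type*} [CommRing R] [Ring B] [Algebra R B]
    (f : B →ₗ[R] R) (hf : f 1 = 1) (a : B) :
    f ((a - f a • 1) ^ 2) = f (a ^ 2) - f a ^ 2 := by
  simp only [sq, sub_mul, mul_sub, smul_mul_assoc, mul_smul_comm, one_mul, mul_one,
    map_sub, map_smul, hf, smul_eq_mul]
  ring

theorem map_sub_smul_one_self {R B : Type*} [CommRing R] [Ring B] [Algebra R B]
    (f : B →ₗ[R] R) (hf : f 1 = 1) (a : B) : f (a - f a • 1) = 0 := by
  rw [map_sub, map_smul, hf, smul_eq_mul, mul_one, sub_self]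

section

variable {I : Type*} {A : I → Type*} [∀ i, Ring (A i)] [∀ i, Algebra ℂ (A i)]

theorem condExp_single [DecidableEq I] (φ : ∀ i, A i →ₗ[ℂ] ℂ) (i : I) (x : A i) :
    condExp φ (Pi.single i x) = Pi.single i (φ i x) := by
  funext j
  obtain rfl | hj := eq_or_ne j i
  · simp [condExp]
  · simp [condExp, Pi.single_eq_of_ne hj]

theorem single_mem_supportedAlg [DecidableEq I] {W : Set I} {i : I} (hi : i ∈ W) (x : A i) :
    Pi.single i x ∈ supportedAlg A W :=
  Algebra.subset_adjoin <| Or.inr fun _ hj => Pi.single_eq_of_ne (by rintro rfl; exact hj hi) x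

theorem FreeOverD.condExp_mul_eq_zero {φ : ∀ i, A i →ₗ[ℂ] ℂ} {B₁ B₂ : Subalgebra ℂ (∀ i, A i)}
    (hfree : FreeOverD φ B₁ B₂) {x y : ∀ i, A i} (hx : x ∈ B₁) (hy : y ∈ B₂)
    (hx₀ : condExp φ x = 0) (hy₀ : condExp φ y = 0) : condExp φ (x * y) = 0 := by
  have h := hfree 2 (by norm_num) ![x, y] ![true, false]
    (fun k => by fin_cases k <;> simpa)
    (fun k hk => by fin_cases k <;> simp at hk ⊢)
    (fun k => by fin_cases k <;> simpa)
  simpa [List.ofFn_succ] using h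

end

theorem supportedAlg_not_free_of_common_vertex_general
    {I : Type*} {A : I → Type*} [∀ i, Ring (A i)]
    [∀ i, Algebra ℂ (A i)] (φ : ∀ i, A i →ₗ[ℂ] ℂ) (hφ : ∀ i, φ i 1 = 1)
    (W₁ W₂ : Set I) (i₀ : I) (hi₁ : i₀ ∈ W₁) (hi₂ : i₀ ∈ W₂)
    (a : A i₀) (ha : φ i₀ (a ^ 2) ≠ (φ i₀ a) ^ 2) :
    ¬ FreeOverD φ (supportedAlg A W₁) (supportedAlg A W₂) := by
  classical
  intro hfree
  set b := a - φ i₀ a • 1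
  have hy₀ : condExp φ (Pi.single i₀ b) = 0 := by
    rw [condExp_single, map_sub_smul_one_self _ (hφ i₀), Pi.single_zero]
  have hyy := hfree.condExp_mul_eq_zero (single_mem_supportedAlg hi₁ b)
    (single_mem_supportedAlg hi₂ b) hy₀ hy₀
  rw [← Pi.single_mul, ← sq, condExp_single, map_sub_smul_one_sq _ (hφ i₀)] at hyy
  exact ha (sub_eq_zero.mp (by simpa using congrFun hyy i₀))

/-- if `W₁` and `W₂` share a common index `i₀` at which some element
`a ∈ A_{i₀}` satisfies `φ_{i₀}(a²) ≠ φ_{i₀}(a)²`, then the subalgebras generated by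
`ι(D)` and the tuples supported in `W₁`, resp. `W₂`, are NOT free over `D`. -/
theorem supportedAlg_not_free_of_common_vertex
    {I : Type*} [Nonempty I] {A : I → Type*} [∀ i, Ring (A i)]
    [∀ i, Algebra ℂ (A i)] (φ : ∀ i, A i →ₗ[ℂ] ℂ) (hφ : ∀ i, φ i 1 = 1)
    (W₁ W₂ : Set I) (i₀ : I) (hi₁ : i₀ ∈ W₁) (hi₂ : i₀ ∈ W₂)
    (a : A i₀) (ha : φ i₀ (a ^ 2) ≠ (φ i₀ a) ^ 2) :
    ¬ FreeOverD φ (supportedAlg A W₁) (supportedAlg A W₂) :=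
  supportedAlg_not_free_of_common_vertex_general φ hφ W₁ W₂ i₀ hi₁ hi₂ a ha
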